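/- Let g be the 3-dimensional real Lie algebra with basis e₁, e₂, e₃ and brackets [e₁,e₂] = e₁, [e₁,e₃] = 0, [e₂,e₃] = 0. Then g × g admits an integrable complex structure. -/

import Mathlib

/-!
With `J² = -1` the Nijenhuis tensor satisfies `N(x, Jy) = N(Jx, y) = -J N(x, y)`, so it vanishes
as soon as it vanishes on pairs from a complex frame, i.e. a family `v` with `v, Jv` spanning.
On `g × g` take `J` rotating `span {e₁, e₂}` in each factor and exchanging the two copies of `e₃`,
with frame `(e₁, 0), (0, e₁), (e₃, 0)` (here `eᵢ = b (i - 1)`). Every bracket entering `N` on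
this frame is either between the two factors or with `e₃`, hence zero.
-/

/-- Componentwise bracket on the product. -/
instance prodBracket {L : Type*} [LieRing L] : Bracket (L × L) (L × L) :=
  ⟨fun x y => (⁅x.1, y.1⁆, ⁅x.2, y.2⁆)⟩

instance prodLieRing {L : Type*} [LieRing L] : LieRing (L × L) where
  add_lie x y z := by ext <;> simp [Bracket.bracket]
  lie_add x y z := by ext <;> simp [Bracket.bracket]
  lie_self x := by ext <;> simp [Bracket.bracket]
  leibniz_lie x y z := by ext <;> simp [Bracket.bracket]

instance prodLieAlgebra {L : Type*} [LieRing L] [LieAlgebra ℝ L] : LieAlgebra ℝ (L × L) where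
  lie_smul t x y := by ext <;> simp [Bracket.bracket]

@[simp]
theorem lie_prod_mk {L : Type*} [LieRing L] (a b c d : L) :
    ⁅((a, b) : L × L), (c, d)⁆ = (⁅a, c⁆, ⁅b, d⁆) := rfl

section Nijenhuis

variable {R L : Type*} [CommRing R] [LieRing L] [LieAlgebra R L] (J : L →ₗ[R] L)

def nijenhuis : L →ₗ[R] L →ₗ[R] L :=
  LinearMap.mk₂ R (fun x y => ⁅x, y⁆ + J ⁅J x, y⁆ + J ⁅x, J y⁆ - ⁅J x, J y⁆)
    (fun x x' y => by simp only [map_add, add_lie]; abel)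
    (fun c x y => by simp only [map_smul, smul_lie, smul_add, smul_sub])
    (fun x y y' => by simp only [map_add, lie_add]; abel)
    (fun c x y => by simp only [map_smul, lie_smul, smul_add, smul_sub])

theorem nijenhuis_apply (x y : L) :
    nijenhuis J x y = ⁅x, y⁆ + J ⁅J x, y⁆ + J ⁅x, J y⁆ - ⁅J x, J y⁆ := rfl

theorem nijenhuis_self (x : L) : nijenhuis J x x = 0 := by
  rw [nijenhuis_apply, ← lie_skew x (J x), map_neg, lie_self, lie_self]
  abel

theorem nijenhuis_swap (x y : L) : nijenhuis J y x = -nijenhuis J x y := by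
  simp only [nijenhuis_apply, ← lie_skew y, ← lie_skew (J y), map_neg]
  abel

variable {J}

theorem nijenhuis_apply_right (hJ : ∀ x, J (J x) = -x) (x y : L) :
    nijenhuis J x (J y) = -J (nijenhuis J x y) := by
  simp only [nijenhuis_apply, hJ, map_add, map_sub, map_neg, lie_neg]
  abel

theorem nijenhuis_apply_left (hJ : ∀ x, J (J x) = -x) (x y : L) :
    nijenhuis J (J x) y = -J (nijenhuis J x y) := by
  rw [nijenhuis_swap, nijenhuis_apply_right hJ, nijenhuis_swap J x, map_neg, neg_neg]

theorem nijenhuis_eq_zero_of_span {ι : Type*} {v : ι → L} (hJ : ∀ x, J (J x) = -x)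
    (hv : Submodule.span R (Set.range (Sum.elim v (J ∘ v))) = ⊤)
    (hN : ∀ i j, nijenhuis J (v i) (v j) = 0) : nijenhuis J = 0 := by
  refine LinearMap.ext_on_range hv fun i => LinearMap.ext_on_range hv fun j => ?_
  rcases i with i | i <;> rcases j with j | j <;>
    simp only [Sum.elim_inl, Sum.elim_inr, Function.comp_apply, nijenhuis_apply_left hJ,
      nijenhuis_apply_right hJ, hN, map_zero, neg_zero, LinearMap.zero_apply]

end Nijenhuis

section PairedComplexStructure

variable {g : Type*} [LieRing g] [LieAlgebra ℝ g] (b : Module.Basis (Fin 3) ℝ g)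

noncomputable def pairedComplexStructure : g × g →ₗ[ℝ] g × g :=
  (b.prod b).constr ℝ
    (Sum.elim ![(b 1, 0), -(b 0, 0), (0, b 2)] ![(0, b 1), -(0, b 0), -(b 2, 0)])

theorem pairedComplexStructure_apply_inl (i : Fin 3) :
    pairedComplexStructure b (b i, 0) = ![(b 1, 0), -(b 0, 0), (0, b 2)] i := by
  have : ((b i, 0) : g × g) = b.prod b (.inl i) := by simp
  rw [this]
  exact (b.prod b).constr_basis ℝ _ (.inl i)

theorem pairedComplexStructure_apply_inr (i : Fin 3) :
    pairedComplexStructure b (0, b i) = ![(0, b 1), -(0, b 0), -(b 2, 0)] i := by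
  have : ((0, b i) : g × g) = b.prod b (.inr i) := by simp
  rw [this]
  exact (b.prod b).constr_basis ℝ _ (.inr i)

theorem pairedComplexStructure_apply_apply (x : g × g) :
    pairedComplexStructure b (pairedComplexStructure b x) = -x := by
  suffices pairedComplexStructure b ∘ₗ pairedComplexStructure b = -LinearMap.id from
    LinearMap.congr_fun this x
  refine (b.prod b).ext fun i => ?_
  rcases i with i | i <;> fin_cases i <;>
    simp [pairedComplexStructure_apply_inl, pairedComplexStructure_apply_inr, -Prod.neg_mk]

theorem span_pairedComplexStructure_frame :
    Submodule.span ℝ (Set.range (Sum.elim ![(b 0, 0), (0, b 0), (b 2, 0)]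
      (pairedComplexStructure b ∘ ![(b 0, 0), (0, b 0), (b 2, 0)]))) = ⊤ := by
  refine top_unique ((b.prod b).span_eq.ge.trans (Submodule.span_mono ?_))
  rintro _ ⟨i | i, rfl⟩ <;> fin_cases i
  exacts [⟨.inl 0, by simp⟩, ⟨.inr 0, by simp [pairedComplexStructure_apply_inl]⟩,
    ⟨.inl 2, by simp⟩, ⟨.inl 1, by simp⟩, ⟨.inr 1, by simp [pairedComplexStructure_apply_inr]⟩,
    ⟨.inr 2, by simp [pairedComplexStructure_apply_inl]⟩]

theorem nijenhuis_pairedComplexStructure (h13 : ⁅b 0, b 2⁆ = 0) (h23 : ⁅b 1, b 2⁆ = 0) :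
    nijenhuis (pairedComplexStructure b) = 0 := by
  have h31 : ⁅b 2, b 0⁆ = 0 := by rw [← lie_skew, h13, neg_zero]
  have h32 : ⁅b 2, b 1⁆ = 0 := by rw [← lie_skew, h23, neg_zero]
  refine nijenhuis_eq_zero_of_span (pairedComplexStructure_apply_apply b)
    (span_pairedComplexStructure_frame b) fun i j => ?_
  fin_cases i <;> fin_cases j <;>
    simp [nijenhuis_self, nijenhuis_apply, pairedComplexStructure_apply_inl,
      pairedComplexStructure_apply_inr, h13, h23, h31, h32, Prod.mk_zero_zero]

end PairedComplexStructure

theorem bianchi2_product_admits_general {g : Type*} [LieRing g] [LieAlgebra ℝ g]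
    (b : Module.Basis (Fin 3) ℝ g) 
    (h13 : ⁅b 0, b 2⁆ = 0) (h23 : ⁅b 1, b 2⁆ = 0) :
    ∃ 𝒥 : (g × g) →ₗ[ℝ] (g × g), (∀ x, 𝒥 (𝒥 x) = -x) ∧
      ∀ x y : g × g,
        ⁅x, y⁆ + 𝒥 ⁅𝒥 x, y⁆ + 𝒥 ⁅x, 𝒥 y⁆ - ⁅𝒥 x, 𝒥 y⁆ = 0 :=
  ⟨pairedComplexStructure b, pairedComplexStructure_apply_apply b,
    LinearMap.congr_fun₂ (nijenhuis_pairedComplexStructure b h13 h23)⟩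

theorem bianchi2_product_admits {g : Type*} [LieRing g] [LieAlgebra ℝ g]
    (b : Module.Basis (Fin 3) ℝ g) 
    (h12 : ⁅b 0, b 1⁆ = b 0) (h13 : ⁅b 0, b 2⁆ = 0) (h23 : ⁅b 1, b 2⁆ = 0) :
    ∃ 𝒥 : (g × g) →ₗ[ℝ] (g × g), (∀ x, 𝒥 (𝒥 x) = -x) ∧
      ∀ x y : g × g,
        ⁅x, y⁆ + 𝒥 ⁅𝒥 x, y⁆ + 𝒥 ⁅x, 𝒥 y⁆ - ⁅𝒥 x, 𝒥 y⁆ = 0 :=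
  bianchi2_product_admits_general b h13 h23
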